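/- Let d ≥ 2. Then w(E) − (1 + x_1²) ∈ J, where E = [A,B,C,C] if d ≡ 0 mod 2, E = [A,B,B] if d ≡ 1 mod 4, and E = A if d ≡ 3 mod 4. Since x_1² ∉ J, the class of w(E) in F_2[x_1,…,x_d]/J is 1 + [x_1²] ≠ 1; in particular its degree-1 component vanishes and its degree-2 component is nonzero. -/

import Mathlib

open MvPolynomial

abbrev S4 : Type := ZMod 2 × ZMod 2

def Sα (s : S4) : ZMod 2 := s.1
def Sβ (s : S4) : ZMod 2 := s.2

def s0 : S4 := (0, 0)
def s1 : S4 := (1, 1)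
def s2 : S4 := (1, 0)
def s3 : S4 := (0, 1)

/-- The linear form `α_j^A = Σ_i α(A_{ij}) x_i`. -/
noncomputable def alphaP {d : ℕ} {ι : Type*} (A : Matrix (Fin d) ι S4) (j : ι) :
    MvPolynomial (Fin d) (ZMod 2) := ∑ i, C (Sα (A i j)) * X i

/-- The linear form `β_j^A = Σ_i β(A_{ij}) x_i`. -/
noncomputable def betaP {d : ℕ} {ι : Type*} (A : Matrix (Fin d) ι S4) (j : ι) :
    MvPolynomial (Fin d) (ZMod 2) := ∑ i, C (Sβ (A i j)) * X i

/-- `θ_j^A = α_j^A · β_j^A`. -/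
noncomputable def thetaP {d : ℕ} {ι : Type*} (A : Matrix (Fin d) ι S4) (j : ι) :
    MvPolynomial (Fin d) (ZMod 2) := alphaP A j * betaP A j

/-- The characteristic ideal `I_A = ⟨θ_1^A, …, θ_n^A⟩`. -/
noncomputable def charIdeal {d : ℕ} {ι : Type*} (A : Matrix (Fin d) ι S4) :
    Ideal (MvPolynomial (Fin d) (ZMod 2)) := Ideal.span (Set.range (thetaP A))

/-- The Stiefel–Whitney polynomial `w(A) = Π_j (1 + α_j^A + β_j^A)`. -/
noncomputable def swPoly {d : ℕ} {ι : Type*} [Fintype ι] (A : Matrix (Fin d) ι S4) :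
    MvPolynomial (Fin d) (ZMod 2) := ∏ j, (1 + alphaP A j + betaP A j)

/-- The ideal `J = ⟨{x_i² + x_j² : i ≠ j} ∪ {x_i x_j : i ≠ j}⟩`. -/
noncomputable def Jideal (d : ℕ) : Ideal (MvPolynomial (Fin d) (ZMod 2)) :=
  Ideal.span ({q | ∃ i j : Fin d, i ≠ j ∧ q = X i ^ 2 + X j ^ 2} ∪
              {q | ∃ i j : Fin d, i ≠ j ∧ q = X i * X j})

/-- `A₀ ∈ S^{d×(d-1)}`: the `l`-th column has entry `1` in rows `l` and `d`, `0` elsewhere. -/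
def matA0 (d : ℕ) : Matrix (Fin d) (Fin (d - 1)) S4 :=
  fun i l => if i.val = l.val ∨ i.val = d - 1 then s1 else s0

/-- Index set for the columns of `A₁`: pairs `1 ≤ i < j ≤ d`. -/
abbrev PairIdx (d : ℕ) : Type := {p : Fin d × Fin d // p.1 < p.2}

/-- `A₁ ∈ S^{d×(d(d-1)/2)}`: the column indexed by `i < j` has entry `2` in row `i`,
entry `3` in row `j` and `0` elsewhere. -/
def matA1 (d : ℕ) : Matrix (Fin d) (PairIdx d) S4 :=
  fun i p => if i = p.1.1 then s2 else if i = p.1.2 then s3 else s0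

/-- `A = [A₀, A₁]`. -/
def matA (d : ℕ) : Matrix (Fin d) (Fin (d - 1) ⊕ PairIdx d) S4 :=
  Matrix.fromCols (matA0 d) (matA1 d)

/-- `B ∈ S^{d×1}`: all entries `2`. -/
def matB (d : ℕ) : Matrix (Fin d) (Fin 1) S4 := fun _ _ => s2

/-- `C ∈ S^{d×1}`: entry `2` in row `1`, `0` elsewhere. -/
def matC (d : ℕ) : Matrix (Fin d) (Fin 1) S4 := fun i _ => if i.val = 0 then s2 else s0

/-- `E = [A,B,C,C]` (the case `d ≡ 0 mod 2`). -/
def matE0 (d : ℕ) := Matrix.fromCols (matA d)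
  (Matrix.fromCols (matB d) (Matrix.fromCols (matC d) (matC d)))

/-- `E = [A,B,B]` (the case `d ≡ 1 mod 4`). -/
def matE1 (d : ℕ) := Matrix.fromCols (matA d) (Matrix.fromCols (matB d) (matB d))

/-- `F = [E,C,C,C,C] = [A,C,C,C,C]` (the case `d ≡ 3 mod 4`; there `E = A`). -/
def matF3 (d : ℕ) := Matrix.fromCols (matA d)
  (Matrix.fromCols (matC d)
    (Matrix.fromCols (matC d) (Matrix.fromCols (matC d) (matC d))))

/-!
Modulo `J` the classes of the variables satisfy `x_i x_j = 0` for `i ≠ j` and `x_i² = τ` for a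
common `τ`, and `τ x_i = 0` since `d ≥ 2`. Hence `y_i = 1 + x_i` satisfy
`1 + Σ_{i ∈ s} x_i = ∏_{i ∈ s} y_i`, and `y_i² = 1 + τ` is an involution. A column of `A₀`
contributes `1` (its `α` and `β` agree), the columns of `A₁` contribute
`∏_{i<j} y_i y_j = (∏ y_i)^(d-1)`, `B` contributes `∏ y_i` and `C` contributes `y_1`.
So `w(E) ≡ (1 + τ)^(d k)` for a suitable `k` (times `y_1² = 1 + τ` when `d` is even), and the
parity of `d k` gives `1 + τ` in all three cases.

That `x_1² ∉ J` is witnessed by the linear form summing the coefficients of the monomials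
`x_k²`: it vanishes on `q · g` for every generator `g` of `J`, but not on `x_1²`.
-/

open Finset

theorem prod_pairIdx_mul {d : ℕ} {M : Type*} [CommMonoid M] (f : Fin d → M) :
    ∏ p : PairIdx d, f p.1.1 * f p.1.2 = ∏ i, f i ^ (d - 1) := by
  have h_pairs : ∏ p : PairIdx d, f p.1.1 * f p.1.2 = ∏ i, ∏ j ∈ Ioi i, f i * f j := by
    rw [← prod_subtype (univ.filter fun p : Fin d × Fin d => p.1 < p.2) (by simp)
      (fun p => f p.1 * f p.2)]
    exact prod_finset_product _ _ _ (by simp)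
  have h_swap : ∏ i, ∏ j ∈ Ioi i, f j = ∏ j, ∏ i ∈ Iio j, f j := prod_comm' (by simp)
  simp only [h_pairs, prod_mul_distrib, h_swap]
  rw [← prod_mul_distrib]
  refine prod_congr rfl fun i _ => ?_
  rw [prod_const, prod_const, Fin.card_Ioi, Fin.card_Iio, ← pow_add]
  congr 1
  omega

section StiefelWhitney

variable {d : ℕ}

theorem swPoly_fromCols {ι κ : Type*} [Fintype ι] [Fintype κ]
    (M : Matrix (Fin d) ι S4) (N : Matrix (Fin d) κ S4) :
    swPoly (Matrix.fromCols M N) = swPoly M * swPoly N := by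
  simp only [swPoly, Fintype.prod_sum_type, alphaP, betaP, Matrix.fromCols_apply_inl,
    Matrix.fromCols_apply_inr]

theorem swPoly_eq_one_of_Sα_eq_Sβ {ι : Type*} [Fintype ι] {A : Matrix (Fin d) ι S4}
    (h : ∀ i j, Sα (A i j) = Sβ (A i j)) : swPoly A = 1 := by
  refine prod_eq_one fun j _ => ?_
  rw [add_assoc, show alphaP A j = betaP A j from sum_congr rfl fun i _ => by rw [h],
    CharTwo.add_self_eq_zero, add_zero]

theorem swPoly_matA0 : swPoly (matA0 d) = 1 :=
  swPoly_eq_one_of_Sα_eq_Sβ fun i l => by unfold matA0; split_ifs <;> rfl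

theorem alphaP_matA1 (p : PairIdx d) : alphaP (matA1 d) p = X p.1.1 := by
  simp [alphaP, matA1, apply_ite Prod.fst, Sα, s0, s2, s3]

theorem betaP_matA1 (p : PairIdx d) : betaP (matA1 d) p = X p.1.2 := by
  rw [betaP, sum_eq_single p.1.2
    (fun i _ hi => by simp [matA1, hi, apply_ite Prod.snd, Sβ, s0, s2]) (by simp)]
  simp [matA1, (ne_of_lt p.2).symm, Sβ, s3]

theorem swPoly_matB : swPoly (matB d) = 1 + ∑ i, X i := by
  simp [swPoly, alphaP, betaP, matB, Sα, Sβ, s2]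

theorem swPoly_matC (h0 : 0 < d) : swPoly (matC d) = 1 + X (⟨0, h0⟩ : Fin d) := by
  have h : ∀ i : Fin d, i.val = 0 ↔ i = ⟨0, h0⟩ := fun i => (Fin.ext_iff (b := ⟨0, h0⟩)).symm
  simp [swPoly, alphaP, betaP, matC, apply_ite Prod.fst, apply_ite Prod.snd, Sα, Sβ, s0, s2,
    h]

end StiefelWhitney

section Quotient

variable {d : ℕ}

local notation "π" => Ideal.Quotient.mk (Jideal _)

theorem X_mul_X_mem_Jideal {i j : Fin d} (h : i ≠ j) : X i * X j ∈ Jideal d :=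
  Ideal.subset_span (Or.inr ⟨i, j, h, rfl⟩)

theorem X_sq_add_X_sq_mem_Jideal {i j : Fin d} (h : i ≠ j) : X i ^ 2 + X j ^ 2 ∈ Jideal d :=
  Ideal.subset_span (Or.inl ⟨i, j, h, rfl⟩)

theorem X_pow_three_mem_Jideal (hd : 2 ≤ d) (i : Fin d) : X i ^ 3 ∈ Jideal d := by
  have : Nontrivial (Fin d) := Fin.nontrivial_iff_two_le.mpr hd
  obtain ⟨j, hj⟩ := exists_ne i
  have h : (X i ^ 3 : MvPolynomial (Fin d) (ZMod 2))
      = X i * (X i ^ 2 + X j ^ 2) - X j * (X i * X j) := by ring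
  rw [h]
  exact Ideal.sub_mem _ (Ideal.mul_mem_left _ _ (X_sq_add_X_sq_mem_Jideal hj.symm))
    (Ideal.mul_mem_left _ _ (X_mul_X_mem_Jideal hj.symm))

theorem mk_one_add_X_sq (i j : Fin d) : π (1 + X i) ^ 2 = π (1 + X j ^ 2) := by
  rw [← map_pow, CharTwo.add_sq, one_pow, Ideal.Quotient.eq, add_sub_add_left_eq_sub,
    CharTwo.sub_eq_add]
  rcases eq_or_ne i j with rfl | h
  · rw [CharTwo.add_self_eq_zero]
    exact zero_mem _
  · exact X_sq_add_X_sq_mem_Jideal h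

theorem mk_one_add_X_sq_sq (hd : 2 ≤ d) (i : Fin d) : π (1 + X i ^ 2) ^ 2 = 1 := by
  rw [← map_pow, ← map_one π, Ideal.Quotient.eq, CharTwo.add_sq, one_pow, add_sub_cancel_left,
    ← pow_mul, show X i ^ (2 * 2) = X i * X i ^ 3 by ring]
  exact Ideal.mul_mem_left _ _ (X_pow_three_mem_Jideal hd i)

theorem mk_one_add_sum_X (s : Finset (Fin d)) :
    π (1 + ∑ i ∈ s, X i) = ∏ i ∈ s, π (1 + X i) := by
  induction s using Finset.induction_on with
  | empty => simp
  | insert a s ha ih =>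
    rw [prod_insert ha, ← ih, ← map_mul, Ideal.Quotient.eq, sum_insert ha]
    have h : (1 + (X a + ∑ i ∈ s, X i) - (1 + X a) * (1 + ∑ i ∈ s, X i) :
        MvPolynomial (Fin d) (ZMod 2)) = -∑ i ∈ s, X a * X i := by
      rw [← mul_sum]; ring
    rw [h]
    exact neg_mem (sum_mem fun i hi => X_mul_X_mem_Jideal (ne_of_mem_of_not_mem hi ha).symm)

theorem mk_one_add_X_add_X {i j : Fin d} (h : i ≠ j) :
    π (1 + X i + X j) = π (1 + X i) * π (1 + X j) := by
  rw [← prod_pair (f := fun k => π (1 + X k)) h, ← mk_one_add_sum_X, sum_pair h, add_assoc]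

theorem mk_swPoly_matA : π (swPoly (matA d)) = (∏ i, π (1 + X i)) ^ (d - 1) := by
  rw [matA, swPoly_fromCols, swPoly_matA0, one_mul, swPoly, map_prod]
  simp only [alphaP_matA1, betaP_matA1]
  rw [prod_congr rfl fun p _ => mk_one_add_X_add_X (ne_of_lt p.2),
    prod_pairIdx_mul fun i => π (1 + X i), prod_pow]

theorem mk_swPoly_matB : π (swPoly (matB d)) = ∏ i, π (1 + X i) := by
  rw [swPoly_matB, mk_one_add_sum_X]

theorem prod_mk_one_add_X_pow_two_mul (hd : 2 ≤ d) (i₀ : Fin d) (k : ℕ) :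
    (∏ i, π (1 + X i)) ^ (2 * k) = π (1 + X i₀ ^ 2) ^ (d * k % 2) := by
  simp only [← prod_pow, pow_mul, mk_one_add_X_sq _ i₀]
  rw [prod_const, card_univ, Fintype.card_fin, ← pow_mul, mul_comm,
    pow_eq_pow_mod _ (mk_one_add_X_sq_sq hd i₀)]

theorem mk_swPoly_matE0 (hd : 2 ≤ d) (h : d % 2 = 0) :
    π (swPoly (matE0 d)) = π (1 + X (⟨0, by omega⟩ : Fin d) ^ 2) := by
  have h0 : 0 < d := by omega
  have h_exp : d * (d / 2) % 2 = 0 := by rw [Nat.mul_mod, h, zero_mul, Nat.zero_mod]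
  rw [matE0, swPoly_fromCols, swPoly_fromCols, swPoly_fromCols, map_mul, map_mul, map_mul,
    mk_swPoly_matA, mk_swPoly_matB, swPoly_matC h0, ← mul_assoc, ← pow_succ,
    show d - 1 + 1 = 2 * (d / 2) by omega, prod_mk_one_add_X_pow_two_mul hd ⟨0, h0⟩, h_exp,
    pow_zero, one_mul, ← sq, mk_one_add_X_sq]

theorem mk_swPoly_matE1 (hd : 2 ≤ d) (h : d % 4 = 1) :
    π (swPoly (matE1 d)) = π (1 + X (⟨0, by omega⟩ : Fin d) ^ 2) := by
  have h_exp : d * ((d + 1) / 2) % 2 = 1 := by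
    rw [Nat.mul_mod, show d % 2 = 1 by omega, show (d + 1) / 2 % 2 = 1 by omega]
  rw [matE1, swPoly_fromCols, swPoly_fromCols, map_mul, map_mul, mk_swPoly_matA, mk_swPoly_matB,
    ← mul_assoc, ← pow_succ, ← pow_succ, show d - 1 + 1 + 1 = 2 * ((d + 1) / 2) by omega,
    prod_mk_one_add_X_pow_two_mul hd _, h_exp, pow_one]

theorem mk_swPoly_matA_of_mod_four_eq_three (hd : 2 ≤ d) (h : d % 4 = 3) :
    π (swPoly (matA d)) = π (1 + X (⟨0, by omega⟩ : Fin d) ^ 2) := by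
  have h_exp : d * ((d - 1) / 2) % 2 = 1 := by
    rw [Nat.mul_mod, show d % 2 = 1 by omega, show (d - 1) / 2 % 2 = 1 by omega]
  rw [mk_swPoly_matA, show d - 1 = 2 * ((d - 1) / 2) by omega,
    prod_mk_one_add_X_pow_two_mul hd _, h_exp, pow_one]

end Quotient

section SqCoeffSum

variable {σ R : Type*} [Fintype σ] [CommSemiring R]

noncomputable def sqCoeffSum : MvPolynomial σ R →ₗ[R] R :=
  ∑ k, lcoeff R (Finsupp.single k 2)

theorem sqCoeffSum_apply (p : MvPolynomial σ R) :
    sqCoeffSum p = ∑ k, coeff (Finsupp.single k 2) p := by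
  simp [sqCoeffSum]

theorem sqCoeffSum_mul_X_sq (q : MvPolynomial σ R) (i : σ) :
    sqCoeffSum (q * X i ^ 2) = coeff 0 q := by
  classical
  have h_le (k : σ) : Finsupp.single i 2 ≤ Finsupp.single k 2 ↔ k = i := by
    rw [Finsupp.single_le_iff, Finsupp.single_apply]
    split_ifs <;> simp_all [eq_comm]
  simp [sqCoeffSum_apply, X_pow_eq_monomial, coeff_mul_monomial', h_le]

theorem sqCoeffSum_mul_X_mul_X (q : MvPolynomial σ R) {i j : σ} (h : i ≠ j) :
    sqCoeffSum (q * (X i * X j)) = 0 := by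
  classical
  have h_le (k : σ) : ¬ Finsupp.single i 1 + Finsupp.single j 1 ≤ Finsupp.single k 2 := by
    intro hle
    rcases eq_or_ne k i with rfl | hk
    · simpa [Finsupp.single_apply, h] using hle j
    · simpa [Finsupp.single_apply, hk] using hle i
  simp [sqCoeffSum_apply, X, monomial_mul, coeff_mul_monomial', h_le]

end SqCoeffSum

theorem sqCoeffSum_mul_eq_zero_of_mem_Jideal {d : ℕ} {p : MvPolynomial (Fin d) (ZMod 2)}
    (hp : p ∈ Jideal d) (q : MvPolynomial (Fin d) (ZMod 2)) : sqCoeffSum (q * p) = 0 := by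
  induction hp using Submodule.span_induction generalizing q with
  | mem g hg =>
    rcases hg with ⟨i, j, h, rfl⟩ | ⟨i, j, h, rfl⟩
    · rw [mul_add, map_add, sqCoeffSum_mul_X_sq, sqCoeffSum_mul_X_sq, CharTwo.add_self_eq_zero]
    · exact sqCoeffSum_mul_X_mul_X q h
  | zero => simp
  | add a b _ _ ha hb => rw [mul_add, map_add, ha, hb, add_zero]
  | smul a b _ hb => rw [smul_eq_mul, ← mul_assoc]; exact hb (q * a)

theorem X_sq_notMem_Jideal {d : ℕ} (i : Fin d) : X i ^ 2 ∉ Jideal d := fun h => by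
  have h_zero := sqCoeffSum_mul_eq_zero_of_mem_Jideal h 1
  rw [sqCoeffSum_mul_X_sq, coeff_zero_one] at h_zero
  exact one_ne_zero h_zero

/-- for `d ≥ 2`, `w(E) - (1 + x₁²) ∈ J` (with `E` as in the three cases),
while `x₁² ∉ J`. -/
theorem sw_matE (d : ℕ) (hd : 2 ≤ d) :
    (d % 2 = 0 → swPoly (matE0 d) - (1 + X (⟨0, by omega⟩ : Fin d) ^ 2) ∈ Jideal d) ∧
    (d % 4 = 1 → swPoly (matE1 d) - (1 + X (⟨0, by omega⟩ : Fin d) ^ 2) ∈ Jideal d) ∧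
    (d % 4 = 3 → swPoly (matA d) - (1 + X (⟨0, by omega⟩ : Fin d) ^ 2) ∈ Jideal d) ∧
    X (⟨0, by omega⟩ : Fin d) ^ 2 ∉ Jideal d := by
  simp only [← Ideal.Quotient.eq]
  exact ⟨mk_swPoly_matE0 hd, mk_swPoly_matE1 hd, mk_swPoly_matA_of_mod_four_eq_three hd,
    X_sq_notMem_Jideal _⟩
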